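/- Let f : ℝ^m × ℝ^n → ℝ be twice continuously differentiable and globally μ-strongly convex–concave for some μ > 0 (H_{x,x}(x,y) ≽ μI and −H_{y,y}(x,y) ≽ μI for all (x,y)). Let x̂ : ℝ^n → ℝ^m and ŷ : ℝ^m → ℝ^n be the unique maps with ∇_x f(x̂(y), y) = 0 and ∇_y f(x, ŷ(x)) = 0 for all x, y, so that G(x,y) = f(x, ŷ(x)) − f(x̂(y), y). Then G is twice differentiable and its Hessian is block diagonal: ∇²G(x,y) = diag(G_{x,x}(x, ŷ(x)), G_{y,y}(x̂(y), y)), where G_{x,x}(x,y) = H_{x,x}(x,y) + H_{x,y}(x,y)(−H_{y,y}(x,y))^{-1}H_{y,x}(x,y) and G_{y,y}(x,y) = −H_{y,y}(x,y) + H_{y,x}(x,y)(H_{x,x}(x,y))^{-1}H_{x,y}(x,y); both G_{x,x}(x,y) and G_{y,y}(x,y) are symmetric and satisfy G_{x,x}(x,y) ≽ μI and G_{y,y}(x,y) ≽ μI. -/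

import Mathlib

/-!
Split `G(x, y) = φ x + ψ y` with `φ x = f (x, ŷ x)` and `ψ y = -f (x̂ y, y)`; this is why the
Hessian of `G` is block diagonal. Strict concavity of `f (x, ·)` makes `ŷ x` its unique critical
point, with invertible Hessian block `H_{y,y}`, so `ŷ` is `C¹` by the implicit function theorem.
By the envelope theorem `Dφ(x) = D_x f (x, ŷ x)`; differentiating once more and eliminating
`Dŷ(x)` through the differentiated critical-point equation leaves the Schur complement `G_{x,x}`.
The same argument applied to `(y, x) ↦ -f (x, y)` gives `G_{y,y}`. Finally
`H_{x,y} (-H_{y,y})⁻¹ H_{y,x}` is positive semidefinite because `H_{y,x} = H_{x,y}ᵀ`.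
-/

open Matrix Topology
open ContinuousLinearMap (inl inr)

section Partial

variable {E F G : Type*} [NormedAddCommGroup E] [NormedSpace ℝ E] [NormedAddCommGroup F]
  [NormedSpace ℝ F] [NormedAddCommGroup G] [NormedSpace ℝ G]

theorem hasFDerivAt_fderiv_apply {U : E → G} {p : E} (hU : DifferentiableAt ℝ (fderiv ℝ U) p)
    (w : E) : HasFDerivAt (fun p' => fderiv ℝ U p' w) ((fderiv ℝ (fderiv ℝ U) p).flip w) p := by
  simpa using hU.hasFDerivAt.clm_apply (hasFDerivAt_const w p)

theorem fderiv_comp_prodMk_left {U : E × F → G} {x : E} {y : F}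
    (hU : DifferentiableAt ℝ U (x, y)) :
    fderiv ℝ (fun x' => U (x', y)) x = fderiv ℝ U (x, y) ∘L inl ℝ E F :=
  (hU.hasFDerivAt.comp x (hasFDerivAt_prodMk_left x y)).fderiv

theorem fderiv_comp_prodMk_right {U : E × F → G} {x : E} {y : F}
    (hU : DifferentiableAt ℝ U (x, y)) :
    fderiv ℝ (fun y' => U (x, y')) y = fderiv ℝ U (x, y) ∘L inr ℝ E F :=
  (hU.hasFDerivAt.comp y (hasFDerivAt_prodMk_right x y)).fderiv

variable {U : E × F → G} {x : E} {y : F}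

theorem fderiv_fderiv_apply_comp_prodMk_left (hU : DifferentiableAt ℝ (fderiv ℝ U) (x, y))
    (q : E × F) (v : E) :
    fderiv ℝ (fun x' => fderiv ℝ U (x', y) q) x v = fderiv ℝ (fderiv ℝ U) (x, y) (v, 0) q := by
  rw [fderiv_comp_prodMk_left (U := fun p => fderiv ℝ U p q)
    (hasFDerivAt_fderiv_apply hU q).differentiableAt, (hasFDerivAt_fderiv_apply hU q).fderiv]
  rfl

theorem fderiv_fderiv_apply_comp_prodMk_right (hU : DifferentiableAt ℝ (fderiv ℝ U) (x, y))
    (q : E × F) (v : F) :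
    fderiv ℝ (fun y' => fderiv ℝ U (x, y') q) y v = fderiv ℝ (fderiv ℝ U) (x, y) (0, v) q := by
  rw [fderiv_comp_prodMk_right (U := fun p => fderiv ℝ U p q)
    (hasFDerivAt_fderiv_apply hU q).differentiableAt, (hasFDerivAt_fderiv_apply hU q).fderiv]
  rfl

theorem fderiv_fderiv_slice_fst_fst (h₁ : Differentiable ℝ U)
    (h₂ : DifferentiableAt ℝ (fderiv ℝ U) (x, y)) (v w : E) :
    fderiv ℝ (fun x' => fderiv ℝ (fun x'' => U (x'', y)) x' w) x v
      = fderiv ℝ (fderiv ℝ U) (x, y) (v, 0) (w, 0) := by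
  simp_rw [fderiv_comp_prodMk_left (h₁ _)]
  exact fderiv_fderiv_apply_comp_prodMk_left h₂ _ v

theorem fderiv_fderiv_slice_fst_snd (h₁ : Differentiable ℝ U)
    (h₂ : DifferentiableAt ℝ (fderiv ℝ U) (x, y)) (v : E) (w : F) :
    fderiv ℝ (fun x' => fderiv ℝ (fun y' => U (x', y')) y w) x v
      = fderiv ℝ (fderiv ℝ U) (x, y) (v, 0) (0, w) := by
  simp_rw [fderiv_comp_prodMk_right (h₁ _)]
  exact fderiv_fderiv_apply_comp_prodMk_left h₂ _ v

theorem fderiv_fderiv_slice_snd_fst (h₁ : Differentiable ℝ U)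
    (h₂ : DifferentiableAt ℝ (fderiv ℝ U) (x, y)) (v : F) (w : E) :
    fderiv ℝ (fun y' => fderiv ℝ (fun x' => U (x', y')) x w) y v
      = fderiv ℝ (fderiv ℝ U) (x, y) (0, v) (w, 0) := by
  simp_rw [fderiv_comp_prodMk_left (h₁ _)]
  exact fderiv_fderiv_apply_comp_prodMk_right h₂ _ v

theorem fderiv_fderiv_slice_snd_snd (h₁ : Differentiable ℝ U)
    (h₂ : DifferentiableAt ℝ (fderiv ℝ U) (x, y)) (v w : F) :
    fderiv ℝ (fun y' => fderiv ℝ (fun y'' => U (x, y'')) y' w) y v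
      = fderiv ℝ (fderiv ℝ U) (x, y) (0, v) (0, w) := by
  simp_rw [fderiv_comp_prodMk_right (h₁ _)]
  exact fderiv_fderiv_apply_comp_prodMk_right h₂ _ v

end Partial

theorem ContinuousLinearMap.isInvertible_of_injective {V W : Type*} [NormedAddCommGroup V]
    [NormedSpace ℝ V] [FiniteDimensional ℝ V] [NormedAddCommGroup W] [NormedSpace ℝ W]
    [FiniteDimensional ℝ W] (h : Module.finrank ℝ V = Module.finrank ℝ W) {T : V →L[ℝ] W}
    (hT : Function.Injective T) : T.IsInvertible :=
  ⟨.ofBijective T (LinearMap.ker_eq_bot.mpr hT) (LinearMap.range_eq_top.mpr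
    ((LinearMap.injective_iff_surjective_of_finrank_eq_finrank h).mp hT)), rfl⟩

section CriticalPoint

variable {E F : Type*} [NormedAddCommGroup E] [NormedSpace ℝ E] [NormedAddCommGroup F]
  [NormedSpace ℝ F] {g : E × F → ℝ}

theorem eq_of_fderiv_slice_eq_zero (hg : ContDiff ℝ 2 g)
    (hneg : ∀ p (d : F), d ≠ 0 → fderiv ℝ (fderiv ℝ g) p (0, d) (0, d) < 0) {u : E} {v₁ v₂ : F}
    (h₁ : fderiv ℝ (fun v => g (u, v)) v₁ = 0) (h₂ : fderiv ℝ (fun v => g (u, v)) v₂ = 0) :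
    v₁ = v₂ := by
  by_contra hne
  set d := v₁ - v₂
  have hd : d ≠ 0 := sub_ne_zero.mpr hne
  have hg₁ : Differentiable ℝ (fderiv ℝ g) := (hg.fderiv_right le_rfl).differentiable one_ne_zero
  set φ : ℝ → ℝ := fun t => fderiv ℝ g (u, v₂ + t • d) (0, d)
  have hφ (t : ℝ) : HasDerivAt φ (fderiv ℝ (fderiv ℝ g) (u, v₂ + t • d) (0, d) (0, d)) t := by
    have hline : HasDerivAt (fun t : ℝ => ((u, v₂ + t • d) : E × F)) (0, d) t :=
      (hasDerivAt_const t u).prodMk (by simpa using ((hasDerivAt_id t).smul_const d).const_add v₂)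
    exact (hasFDerivAt_fderiv_apply (hg₁ _) (0, d)).comp_hasDerivAt t hline
  have hslice (v : F) : fderiv ℝ g (u, v) (0, d) = fderiv ℝ (fun v => g (u, v)) v d := by
    rw [fderiv_comp_prodMk_right ((hg.differentiable two_ne_zero) _)]
    rfl
  have hφ₀ : φ 0 = 0 := by simp [φ, hslice, h₂]
  have hφ₁ : φ 1 = 0 := by simp [φ, d, hslice, h₁]
  have := strictAnti_of_hasDerivAt_neg hφ (fun t => hneg _ d hd) zero_lt_one
  linarith

theorem hasFDerivAt_fderiv_comp_inr {p : E × F} (hg : DifferentiableAt ℝ (fderiv ℝ g) p) :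
    HasFDerivAt (fun q => fderiv ℝ g q ∘L inr ℝ E F)
      ((ContinuousLinearMap.compL ℝ F (E × F) ℝ).flip (inr ℝ E F) ∘L fderiv ℝ (fderiv ℝ g) p) p :=
  ((ContinuousLinearMap.compL ℝ F (E × F) ℝ).flip (inr ℝ E F)).hasFDerivAt.comp p hg.hasFDerivAt

theorem isInvertible_fderiv_fderiv_comp_inr [FiniteDimensional ℝ F] {p : E × F}
    (hg : DifferentiableAt ℝ (fderiv ℝ g) p)
    (hneg : ∀ d : F, d ≠ 0 → fderiv ℝ (fderiv ℝ g) p (0, d) (0, d) < 0) :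
    (fderiv ℝ (fun q => fderiv ℝ g q ∘L inr ℝ E F) p ∘L inr ℝ E F).IsInvertible := by
  rw [(hasFDerivAt_fderiv_comp_inr hg).fderiv]
  refine ContinuousLinearMap.isInvertible_of_injective ?_ ((injective_iff_map_eq_zero _).mpr
    fun d hd => ?_)
  · exact (Subspace.dual_finrank_eq (K := ℝ) (V := F)).symm.trans
      (LinearMap.toContinuousLinearMap (F' := ℝ)).finrank_eq
  · by_contra hd0
    have h0 := congrArg (fun L : F →L[ℝ] ℝ => L d) hd
    simp only [ContinuousLinearMap.comp_apply, ContinuousLinearMap.flip_apply,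
      ContinuousLinearMap.compL_apply, _root_.zero_apply] at h0
    exact (hneg d hd0).ne h0

theorem contDiff_of_fderiv_slice_eq_zero [CompleteSpace E] [FiniteDimensional ℝ F]
    (hg : ContDiff ℝ 2 g)
    (hneg : ∀ p (d : F), d ≠ 0 → fderiv ℝ (fderiv ℝ g) p (0, d) (0, d) < 0) {s : E → F}
    (hs : ∀ u, fderiv ℝ (fun v => g (u, v)) (s u) = 0) : ContDiff ℝ 1 s := by
  rw [contDiff_iff_contDiffAt]
  intro u
  set Φ : E × F → F →L[ℝ] ℝ := fun q => fderiv ℝ g q ∘L inr ℝ E F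
  have hΦ : ContDiff ℝ 1 Φ :=
    ((ContinuousLinearMap.compL ℝ F (E × F) ℝ).flip (inr ℝ E F)).contDiff.comp
      (hg.fderiv_right le_rfl)
  have hΦ_eq (x : E) (v : F) : Φ (x, v) = fderiv ℝ (fun v => g (x, v)) v :=
    (fderiv_comp_prodMk_right ((hg.differentiable two_ne_zero) _)).symm
  have hinv := isInvertible_fderiv_fderiv_comp_inr
    ((hg.fderiv_right le_rfl).differentiable one_ne_zero (u, s u)) (hneg (u, s u))
  have cdf : ContDiffAt ℝ 1 Φ (u, s u) := hΦ.contDiffAt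
  have hsψ : s =ᶠ[𝓝 u] cdf.implicitFunction one_ne_zero hinv := by
    filter_upwards [cdf.eventually_apply_implicitFunction one_ne_zero hinv] with x hx
    refine eq_of_fderiv_slice_eq_zero hg hneg (hs x) ?_
    rw [← hΦ_eq, hx, hΦ_eq, hs]
  exact (cdf.contDiffAt_implicitFunction one_ne_zero hinv).congr_of_eventuallyEq hsψ

variable {s : E → F} {u : E}

theorem hasFDerivAt_comp_graph_of_fderiv_slice_eq_zero (hg : DifferentiableAt ℝ g (u, s u))
    (hs : DifferentiableAt ℝ s u) (hcrit : fderiv ℝ (fun v => g (u, v)) (s u) = 0) :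
    HasFDerivAt (fun u' => g (u', s u')) (fderiv ℝ g (u, s u) ∘L inl ℝ E F) u := by
  have h := hg.hasFDerivAt.comp u ((hasFDerivAt_id u).prodMk hs.hasFDerivAt)
  refine h.congr_fderiv (ContinuousLinearMap.ext fun v => ?_)
  rw [fderiv_comp_prodMk_right hg] at hcrit
  have h0 : fderiv ℝ g (u, s u) (0, fderiv ℝ s u v) = 0 := by
    simpa using congrArg (· (fderiv ℝ s u v)) hcrit
  simpa [← ContinuousLinearMap.comp_inl_add_comp_inr (fderiv ℝ g (u, s u)) (v, fderiv ℝ s u v)]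
    using h0

theorem fderiv_fderiv_comp_graph_apply (hg : DifferentiableAt ℝ (fderiv ℝ g) (u, s u))
    (hs : DifferentiableAt ℝ s u) (q : E × F) (v : E) :
    fderiv ℝ (fun u' => fderiv ℝ g (u', s u') q) u v
      = fderiv ℝ (fderiv ℝ g) (u, s u) (v, fderiv ℝ s u v) q := by
  have h := (hasFDerivAt_fderiv_apply hg q).comp u ((hasFDerivAt_id u).prodMk hs.hasFDerivAt)
  rw [show (fun u' => fderiv ℝ g (u', s u') q) = (fun p => fderiv ℝ g p q) ∘ fun u' => (id u', s u')
    from rfl, h.fderiv]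
  rfl

theorem contDiff_comp_graph_of_fderiv_slice_eq_zero [CompleteSpace E] [FiniteDimensional ℝ F]
    (hg : ContDiff ℝ 2 g)
    (hneg : ∀ p (d : F), d ≠ 0 → fderiv ℝ (fderiv ℝ g) p (0, d) (0, d) < 0)
    (hs : ∀ u, fderiv ℝ (fun v => g (u, v)) (s u) = 0) : ContDiff ℝ 2 fun u => g (u, s u) := by
  have hs₁ := contDiff_of_fderiv_slice_eq_zero hg hneg hs
  have hderiv (u : E) := hasFDerivAt_comp_graph_of_fderiv_slice_eq_zero
    ((hg.differentiable two_ne_zero) _) (hs₁.differentiable one_ne_zero u) (hs u)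
  rw [show (2 : WithTop ℕ∞) = 1 + 1 from rfl, contDiff_succ_iff_fderiv,
    funext fun u => (hderiv u).fderiv]
  refine ⟨fun u => (hderiv u).differentiableAt, by simp, ?_⟩
  exact ((ContinuousLinearMap.compL ℝ E (E × F) ℝ).flip (inl ℝ E F)).contDiff.comp
    ((hg.fderiv_right le_rfl).comp (contDiff_id.prodMk hs₁))

end CriticalPoint

section Coordinates

variable {ι κ X Y : Type*} [DecidableEq ι] [DecidableEq κ] [NormedAddCommGroup X]
  [NormedSpace ℝ X] [NormedAddCommGroup Y] [NormedSpace ℝ Y]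

noncomputable def bilinMatrix (B : X →L[ℝ] Y →L[ℝ] ℝ) (l : (ι → ℝ) →L[ℝ] X)
    (r : (κ → ℝ) →L[ℝ] Y) : Matrix ι κ ℝ :=
  Matrix.of fun i j => B (l (Pi.single i 1)) (r (Pi.single j 1))

theorem apply_eq_dotProduct_bilinMatrix_mulVec [Fintype ι] [Fintype κ] (B : X →L[ℝ] Y →L[ℝ] ℝ)
    (l : (ι → ℝ) →L[ℝ] X) (r : (κ → ℝ) →L[ℝ] Y) (v : ι → ℝ) (w : κ → ℝ) :
    B (l v) (r w) = v ⬝ᵥ (bilinMatrix B l r *ᵥ w) := by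
  have h := Matrix.toLinearMap₂'_apply'
    (LinearMap.toMatrix₂' ℝ (B.bilinearComp l r).toLinearMap₁₂) v w
  rw [Matrix.toLinearMap₂'_toMatrix'] at h
  exact h

theorem apply_prodMk_prodMk [Fintype ι] [Fintype κ]
    (B : ((ι → ℝ) × (κ → ℝ)) →L[ℝ] ((ι → ℝ) × (κ → ℝ)) →L[ℝ] ℝ) (a c : ι → ℝ) (b d : κ → ℝ) :
    B (a, b) (c, d) = a ⬝ᵥ (bilinMatrix B (inl ℝ _ _) (inl ℝ _ _) *ᵥ c)
      + a ⬝ᵥ (bilinMatrix B (inl ℝ _ _) (inr ℝ _ _) *ᵥ d)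
      + b ⬝ᵥ (bilinMatrix B (inr ℝ _ _) (inl ℝ _ _) *ᵥ c)
      + b ⬝ᵥ (bilinMatrix B (inr ℝ _ _) (inr ℝ _ _) *ᵥ d) := by
  simp only [← apply_eq_dotProduct_bilinMatrix_mulVec]
  have hab : ((a, b) : (ι → ℝ) × (κ → ℝ)) = inl ℝ _ _ a + inr ℝ _ _ b := by simp
  have hcd : ((c, d) : (ι → ℝ) × (κ → ℝ)) = inl ℝ _ _ c + inr ℝ _ _ d := by simp
  rw [hab, hcd]
  simp only [map_add, _root_.add_apply]
  ring

end Coordinates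

theorem Matrix.add_vecMul_eq_add_mul_inv_mul_apply {ι κ R : Type*} [Fintype ι] [Fintype κ]
    [DecidableEq κ] [CommRing R] {A : Matrix ι ι R} {B : Matrix ι κ R} {C : Matrix κ ι R}
    {D : Matrix κ κ R} (hD : IsUnit (-D).det) {i : ι} {w : κ → R} (hw : B i + w ᵥ* D = 0)
    (j : ι) : A i j + (w ᵥ* C) j = (A + B * (-D)⁻¹ * C) i j := by
  have hBi : B i = w ᵥ* (-D) := by rw [vecMul_neg]; exact eq_neg_of_add_eq_zero_left hw
  have hw' : w = B i ᵥ* (-D)⁻¹ := by rw [hBi, vecMul_vecMul, mul_nonsing_inv _ hD, vecMul_one]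
  rw [hw']
  rfl

theorem Matrix.PosSemidef.posDef_of_sub_smul_one {n : Type*} [Fintype n] [DecidableEq n]
    {A : Matrix n n ℝ} {μ : ℝ} (hμ : 0 < μ) (h : (A - μ • 1).PosSemidef) : A.PosDef := by
  simpa using (PosDef.one.smul hμ).add_posSemidef h

theorem Matrix.IsSymm.add_mul_inv_mul_transpose {m n R : Type*} [Fintype n] [DecidableEq n]
    [CommRing R] {A : Matrix m m R} {C : Matrix n n R} (hA : A.IsSymm) (hC : C.IsSymm)
    (B : Matrix m n R) : (A + B * C⁻¹ * Bᵀ).IsSymm := by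
  rw [IsSymm, transpose_add, transpose_mul, transpose_mul, transpose_transpose,
    transpose_nonsing_inv, hA.eq, hC.eq, Matrix.mul_assoc]

theorem Matrix.PosSemidef.add_mul_inv_mul_transpose_sub_smul_one {m n : Type*} [Fintype m]
    [Fintype n] [DecidableEq m] [DecidableEq n] {A : Matrix m m ℝ} {C : Matrix n n ℝ} {μ : ℝ}
    (hA : (A - μ • 1).PosSemidef) (hC : C.PosDef) (B : Matrix m n ℝ) :
    (A + B * C⁻¹ * Bᵀ - μ • 1).PosSemidef := by
  rw [add_sub_right_comm, ← conjTranspose_eq_transpose_of_trivial]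
  exact hA.add (hC.inv.posSemidef.mul_mul_conjTranspose_same B)

section CoordinateHessian

variable {ι κ : Type*} [Fintype ι] [Fintype κ] [DecidableEq ι] [DecidableEq κ]
  {g : (ι → ℝ) × (κ → ℝ) → ℝ}

theorem fderiv_fderiv_apply_inr_neg_of_posDef
    (hneg : ∀ p, (-bilinMatrix (fderiv ℝ (fderiv ℝ g) p) (inr ℝ _ _) (inr ℝ _ _)).PosDef)
    (p : (ι → ℝ) × (κ → ℝ)) (d : κ → ℝ) (hd : d ≠ 0) :
    fderiv ℝ (fderiv ℝ g) p (0, d) (0, d) < 0 := by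
  have h := (hneg p).dotProduct_mulVec_pos hd
  rw [apply_prodMk_prodMk]
  simp only [star_trivial, neg_mulVec, dotProduct_neg, dotProduct_zero, zero_dotProduct,
    mulVec_zero] at h ⊢
  linarith

theorem fderiv_fderiv_comp_graph_single_eq_schur (hg : ContDiff ℝ 2 g)
    (hneg : ∀ p, (-bilinMatrix (fderiv ℝ (fderiv ℝ g) p) (inr ℝ _ _) (inr ℝ _ _)).PosDef)
    {s : (ι → ℝ) → κ → ℝ} (hs : ∀ u, fderiv ℝ (fun v => g (u, v)) (s u) = 0) (u : ι → ℝ)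
    (i j : ι) :
    fderiv ℝ (fun u' => fderiv ℝ (fun u'' => g (u'', s u'')) u' (Pi.single j 1)) u (Pi.single i 1)
      = (bilinMatrix (fderiv ℝ (fderiv ℝ g) (u, s u)) (inl ℝ _ _) (inl ℝ _ _)
          + bilinMatrix (fderiv ℝ (fderiv ℝ g) (u, s u)) (inl ℝ _ _) (inr ℝ _ _)
            * (-bilinMatrix (fderiv ℝ (fderiv ℝ g) (u, s u)) (inr ℝ _ _) (inr ℝ _ _))⁻¹
            * bilinMatrix (fderiv ℝ (fderiv ℝ g) (u, s u)) (inr ℝ _ _) (inl ℝ _ _)) i j := by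
  have hg₁ : Differentiable ℝ g := hg.differentiable two_ne_zero
  have hg₂ : Differentiable ℝ (fderiv ℝ g) := (hg.fderiv_right le_rfl).differentiable one_ne_zero
  have hsd : Differentiable ℝ s := (contDiff_of_fderiv_slice_eq_zero hg
    (fderiv_fderiv_apply_inr_neg_of_posDef hneg) hs).differentiable one_ne_zero
  set w := fderiv ℝ s u (Pi.single i 1)
  set B := fderiv ℝ (fderiv ℝ g) (u, s u)
  -- differentiate the critical-point equation `∂_y g (u', s u') = 0` in direction `eᵢ`
  have hw : bilinMatrix B (inl ℝ (ι → ℝ) (κ → ℝ)) (inr ℝ _ _) i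
      + w ᵥ* bilinMatrix B (inr ℝ (ι → ℝ) (κ → ℝ)) (inr ℝ _ _) = 0 := funext fun k => by
    have hzero : (fun u' => fderiv ℝ g (u', s u') (0, Pi.single k 1)) = fun _ => 0 :=
      funext fun u' => by
        simpa [fderiv_comp_prodMk_right (hg₁ _)] using congrArg (· (Pi.single k 1)) (hs u')
    have h := fderiv_fderiv_comp_graph_apply (hg₂ _) (hsd u) (0, Pi.single k 1) (Pi.single i 1)
    rw [hzero, apply_prodMk_prodMk] at h
    simp only [mulVec_zero, dotProduct_zero, mulVec_single, MulOpposite.op_one, one_smul,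
      single_dotProduct, col_apply, one_mul, zero_add, add_zero, fderiv_fun_const,
      Pi.zero_apply, _root_.zero_apply] at h
    exact h.symm
  have hgrad (u' : ι → ℝ) : fderiv ℝ (fun u'' => g (u'', s u'')) u' (Pi.single j 1)
      = fderiv ℝ g (u', s u') (Pi.single j 1, 0) := by
    rw [(hasFDerivAt_comp_graph_of_fderiv_slice_eq_zero (hg₁ _) (hsd u') (hs u')).fderiv]
    rfl
  simp_rw [hgrad]
  rw [fderiv_fderiv_comp_graph_apply (hg₂ _) (hsd u), apply_prodMk_prodMk,
    ← add_vecMul_eq_add_mul_inv_mul_apply (isUnit_iff_ne_zero.mpr (hneg _).det_pos.ne') hw]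
  simp only [mulVec_single, MulOpposite.op_one, one_smul, single_dotProduct, col_apply, one_mul,
    mulVec_zero, dotProduct_zero, add_zero]
  rfl

variable {f : (ι → ℝ) → (κ → ℝ) → ℝ} {A : (ι → ℝ) → (κ → ℝ) → Matrix ι ι ℝ}
  {B : (ι → ℝ) → (κ → ℝ) → Matrix ι κ ℝ} {C : (ι → ℝ) → (κ → ℝ) → Matrix κ ι ℝ}
  {D : (ι → ℝ) → (κ → ℝ) → Matrix κ κ ℝ}

theorem transpose_eq_of_mixed_partials (hf : ContDiff ℝ 2 fun p : (ι → ℝ) × (κ → ℝ) => f p.1 p.2)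
    (hB : ∀ x y i j, B x y i j =
      fderiv ℝ (fun x' => fderiv ℝ (fun y' => f x' y') y (Pi.single j 1)) x (Pi.single i 1))
    (hC : ∀ x y i j, C x y i j =
      fderiv ℝ (fun y' => fderiv ℝ (fun x' => f x' y') x (Pi.single j 1)) y (Pi.single i 1))
    (x : ι → ℝ) (y : κ → ℝ) : (B x y)ᵀ = C x y := by
  ext i j
  have h₁ := hf.differentiable two_ne_zero
  have h₂ := (hf.fderiv_right le_rfl).differentiable one_ne_zero (x, y)
  rw [transpose_apply, hB, hC, fderiv_fderiv_slice_fst_snd h₁ h₂, fderiv_fderiv_slice_snd_fst h₁ h₂,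
    hf.contDiffAt.isSymmSndFDerivAt (by simp)]

theorem contDiff_value_and_fderiv_fderiv_value_eq_schur
    (hf : ContDiff ℝ 2 fun p : (ι → ℝ) × (κ → ℝ) => f p.1 p.2)
    (hA : ∀ x y i j, A x y i j =
      fderiv ℝ (fun x' => fderiv ℝ (fun x'' => f x'' y) x' (Pi.single j 1)) x (Pi.single i 1))
    (hB : ∀ x y i j, B x y i j =
      fderiv ℝ (fun x' => fderiv ℝ (fun y' => f x' y') y (Pi.single j 1)) x (Pi.single i 1))
    (hC : ∀ x y i j, C x y i j =
      fderiv ℝ (fun y' => fderiv ℝ (fun x' => f x' y') x (Pi.single j 1)) y (Pi.single i 1))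
    (hD : ∀ x y i j, D x y i j =
      fderiv ℝ (fun y' => fderiv ℝ (fun y'' => f x y'') y' (Pi.single j 1)) y (Pi.single i 1))
    (hDneg : ∀ x y, (-D x y).PosDef) {s : (ι → ℝ) → κ → ℝ}
    (hs : ∀ x, fderiv ℝ (fun y => f x y) (s x) = 0) :
    ContDiff ℝ 2 (fun x => f x (s x)) ∧
      ∀ x i j, fderiv ℝ (fun x' => fderiv ℝ (fun x'' => f x'' (s x'')) x' (Pi.single j 1)) x
        (Pi.single i 1) = (A x (s x) + B x (s x) * (-D x (s x))⁻¹ * C x (s x)) i j := by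
  set g : (ι → ℝ) × (κ → ℝ) → ℝ := fun p => f p.1 p.2
  have h₁ := hf.differentiable two_ne_zero
  have h₂ := (hf.fderiv_right le_rfl).differentiable one_ne_zero
  have hblocks (x y) :
      A x y = bilinMatrix (fderiv ℝ (fderiv ℝ g) (x, y)) (inl ℝ _ _) (inl ℝ _ _) ∧
      B x y = bilinMatrix (fderiv ℝ (fderiv ℝ g) (x, y)) (inl ℝ _ _) (inr ℝ _ _) ∧
      C x y = bilinMatrix (fderiv ℝ (fderiv ℝ g) (x, y)) (inr ℝ _ _) (inl ℝ _ _) ∧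
      D x y = bilinMatrix (fderiv ℝ (fderiv ℝ g) (x, y)) (inr ℝ _ _) (inr ℝ _ _) := by
    refine ⟨?_, ?_, ?_, ?_⟩ <;> ext i j
    · exact (hA x y i j).trans (fderiv_fderiv_slice_fst_fst h₁ (h₂ _) _ _)
    · exact (hB x y i j).trans (fderiv_fderiv_slice_fst_snd h₁ (h₂ _) _ _)
    · exact (hC x y i j).trans (fderiv_fderiv_slice_snd_fst h₁ (h₂ _) _ _)
    · exact (hD x y i j).trans (fderiv_fderiv_slice_snd_snd h₁ (h₂ _) _ _)
  have hneg (p : (ι → ℝ) × (κ → ℝ)) :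
      (-bilinMatrix (fderiv ℝ (fderiv ℝ g) p) (inr ℝ _ _) (inr ℝ _ _)).PosDef := by
    rw [← (hblocks p.1 p.2).2.2.2]
    exact hDneg p.1 p.2
  refine ⟨contDiff_comp_graph_of_fderiv_slice_eq_zero hf
    (fderiv_fderiv_apply_inr_neg_of_posDef hneg) hs, fun x i j => ?_⟩
  obtain ⟨hA', hB', hC', hD'⟩ := hblocks x (s x)
  rw [hA', hB', hC', hD']
  exact fderiv_fderiv_comp_graph_single_eq_schur hf hneg hs x i j

end CoordinateHessian

theorem Matrix.schur_complements_isSymm_posSemidef {m n : Type*} [Fintype m] [Fintype n]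
    [DecidableEq m] [DecidableEq n] {μ : ℝ} (hμ : 0 < μ) {A : Matrix m m ℝ} {D : Matrix n n ℝ}
    (hA : (A - μ • 1).PosSemidef) (hD : (-D - μ • 1).PosSemidef) (B : Matrix m n ℝ) :
    (A + B * (-D)⁻¹ * Bᵀ).IsSymm ∧ (-D + Bᵀ * A⁻¹ * B).IsSymm ∧
      (A + B * (-D)⁻¹ * Bᵀ - μ • 1).PosSemidef ∧ (-D + Bᵀ * A⁻¹ * B - μ • 1).PosSemidef := by
  have hA' := hA.posDef_of_sub_smul_one hμ
  have hD' := hD.posDef_of_sub_smul_one hμ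
  have sA : A.IsSymm := isHermitian_iff_isSymm.mp hA'.isHermitian
  have sD : (-D).IsSymm := isHermitian_iff_isSymm.mp hD'.isHermitian
  refine ⟨sA.add_mul_inv_mul_transpose sD B, ?_,
    hA.add_mul_inv_mul_transpose_sub_smul_one hD' B, ?_⟩
  · simpa using sD.add_mul_inv_mul_transpose sA Bᵀ
  · simpa using hD.add_mul_inv_mul_transpose_sub_smul_one hA' Bᵀ

/-- For a `C²`, globally `μ`-strongly convex–concave `f` with minimizer map
`x̂` (`∇_x f(x̂(y),y) = 0`) and maximizer map `ŷ` (`∇_y f(x,ŷ(x)) = 0`), the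
suboptimality error `G(x,y) = f(x,ŷ(x)) − f(x̂(y),y)` is twice differentiable
with block-diagonal Hessian `diag(G_{x,x}(x,ŷ(x)), G_{y,y}(x̂(y),y))`, where
`G_{x,x} = H_{x,x} + H_{x,y}(−H_{y,y})⁻¹H_{y,x}` and
`G_{y,y} = −H_{y,y} + H_{y,x}(H_{x,x})⁻¹H_{x,y}`; both `G_{x,x}(x,y)` and
`G_{y,y}(x,y)` are symmetric and `≽ μI`.  The Hessian blocks `Hxx`, `Hxy`,
`Hyx`, `Hyy` of `f` are given entrywise by second partial derivatives. -/
theorem stmt_11 {m n : ℕ} (μ : ℝ) (hμ : 0 < μ)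
    (f : (Fin m → ℝ) → (Fin n → ℝ) → ℝ)
    (hf : ContDiff ℝ 2 fun p : (Fin m → ℝ) × (Fin n → ℝ) => f p.1 p.2)
    (Hxx : (Fin m → ℝ) → (Fin n → ℝ) → Matrix (Fin m) (Fin m) ℝ)
    (hHxx : ∀ x y i j, Hxx x y i j =
      fderiv ℝ (fun x' => fderiv ℝ (fun x'' => f x'' y) x' (Pi.single j 1)) x (Pi.single i 1))
    (Hxy : (Fin m → ℝ) → (Fin n → ℝ) → Matrix (Fin m) (Fin n) ℝ)
    (hHxy : ∀ x y i j, Hxy x y i j =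
      fderiv ℝ (fun x' => fderiv ℝ (fun y' => f x' y') y (Pi.single j 1)) x (Pi.single i 1))
    (Hyx : (Fin m → ℝ) → (Fin n → ℝ) → Matrix (Fin n) (Fin m) ℝ)
    (hHyx : ∀ x y i j, Hyx x y i j =
      fderiv ℝ (fun y' => fderiv ℝ (fun x' => f x' y') x (Pi.single j 1)) y (Pi.single i 1))
    (Hyy : (Fin m → ℝ) → (Fin n → ℝ) → Matrix (Fin n) (Fin n) ℝ)
    (hHyy : ∀ x y i j, Hyy x y i j =
      fderiv ℝ (fun y' => fderiv ℝ (fun y'' => f x y'') y' (Pi.single j 1)) y (Pi.single i 1))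
    (hconv : ∀ x y, (Hxx x y - μ • (1 : Matrix (Fin m) (Fin m) ℝ)).PosSemidef)
    (hconc : ∀ x y, (-(Hyy x y) - μ • (1 : Matrix (Fin n) (Fin n) ℝ)).PosSemidef)
    (xhat : (Fin n → ℝ) → (Fin m → ℝ)) (yhat : (Fin m → ℝ) → (Fin n → ℝ))
    (hxhat : ∀ y, fderiv ℝ (fun x => f x y) (xhat y) = 0)
    (hyhat : ∀ x, fderiv ℝ (fun y => f x y) (yhat x) = 0)
    (G : (Fin m → ℝ) × (Fin n → ℝ) → ℝ)
    (hG : ∀ x y, G (x, y) = f x (yhat x) - f (xhat y) y)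
    (Gxx : (Fin m → ℝ) → (Fin n → ℝ) → Matrix (Fin m) (Fin m) ℝ)
    (hGxx : ∀ x y, Gxx x y = Hxx x y + Hxy x y * (-(Hyy x y))⁻¹ * Hyx x y)
    (Gyy : (Fin m → ℝ) → (Fin n → ℝ) → Matrix (Fin n) (Fin n) ℝ)
    (hGyy : ∀ x y, Gyy x y = -(Hyy x y) + Hyx x y * (Hxx x y)⁻¹ * Hxy x y) :
    -- G is twice differentiable
    (Differentiable ℝ G ∧ Differentiable ℝ (fderiv ℝ G)) ∧
    -- the x–x block of the Hessian of G is Gxx (x, ŷ(x))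
    (∀ x y i j,
      fderiv ℝ (fun x' => fderiv ℝ (fun x'' => G (x'', y)) x' (Pi.single j 1)) x (Pi.single i 1)
        = Gxx x (yhat x) i j) ∧
    -- the off-diagonal blocks of the Hessian of G vanish
    (∀ (x : Fin m → ℝ) (y : Fin n → ℝ) (i : Fin n) (j : Fin m),
      fderiv ℝ (fun y' => fderiv ℝ (fun x' => G (x', y')) x (Pi.single j 1)) y (Pi.single i 1)
        = 0) ∧
    (∀ (x : Fin m → ℝ) (y : Fin n → ℝ) (i : Fin m) (j : Fin n),
      fderiv ℝ (fun x' => fderiv ℝ (fun y' => G (x', y')) y (Pi.single j 1)) x (Pi.single i 1)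
        = 0) ∧
    -- the y–y block of the Hessian of G is Gyy (x̂(y), y)
    (∀ x y i j,
      fderiv ℝ (fun y' => fderiv ℝ (fun y'' => G (x, y'')) y' (Pi.single j 1)) y (Pi.single i 1)
        = Gyy (xhat y) y i j) ∧
    -- symmetry and positivity of Gxx and Gyy
    (∀ x y, (Gxx x y).IsSymm ∧ (Gyy x y).IsSymm ∧
      (Gxx x y - μ • (1 : Matrix (Fin m) (Fin m) ℝ)).PosSemidef ∧
      (Gyy x y - μ • (1 : Matrix (Fin n) (Fin n) ℝ)).PosSemidef) := by
  have hf' : ContDiff ℝ 2 fun q : (Fin n → ℝ) × (Fin m → ℝ) => -f q.2 q.1 :=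
    (hf.comp (contDiff_snd.prodMk contDiff_fst)).neg
  obtain ⟨hφ, hφ''⟩ := contDiff_value_and_fderiv_fderiv_value_eq_schur hf hHxx hHxy hHyx hHyy
    (fun x y => (hconc x y).posDef_of_sub_smul_one hμ) hyhat
  -- the `y`-part of `G` is the value of `(y, x) ↦ -f x y` at its critical point `x̂ y`
  obtain ⟨hψ, hψ''⟩ := contDiff_value_and_fderiv_fderiv_value_eq_schur (f := fun y x => -f x y) hf'
    (A := fun y x => -Hyy x y) (B := fun y x => -Hyx x y) (C := fun y x => -Hxy x y)
    (D := fun y x => -Hxx x y) (s := xhat)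
    (by simp [hHyy]) (by simp [hHyx]) (by simp [hHxy]) (by simp [hHxx])
    (fun y x => by simpa using (hconv x y).posDef_of_sub_smul_one hμ) (by simp [hxhat])
  have hGsplit : G = fun p => f p.1 (yhat p.1) + -f (xhat p.2) p.2 := by
    funext ⟨x, y⟩
    rw [hG, sub_eq_add_neg]
  have hG₂ : ContDiff ℝ 2 G := hGsplit ▸ (hφ.comp contDiff_fst).add (hψ.comp contDiff_snd)
  refine ⟨⟨hG₂.differentiable two_ne_zero, (hG₂.fderiv_right le_rfl).differentiable one_ne_zero⟩,
    fun x y i j => ?_, fun x y i j => by simp [hGsplit], fun x y i j => by simp [hGsplit],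
    fun x y i j => ?_, fun x y => ?_⟩
  · simpa [hGsplit, hGxx] using hφ'' x i j
  · simpa [hGsplit, hGyy] using hψ'' y i j
  · rw [hGxx, hGyy, ← transpose_eq_of_mixed_partials hf hHxy hHyx]
    exact schur_complements_isSymm_posSemidef hμ (hconv x y) (hconc x y) (Hxy x y)
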